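/- Assume ∫ ‖x‖² ν(dx) < ∞ and ∫ μ_t² σ_t⁻⁴ τ(dt) < ∞, and let S = (x₁,…,x_N) have i.i.d. ν-distributed entries. Then the expected minimal empirical denoising score matching loss is at most the population constant: E_S[ ℓ̂_dsm(ŝ*_S ; S, τ) ] ≤ C_sm, where ŝ*_S(y,t) := ∇_y log p̂_t(y) is the empirical score function of S (which minimizes ℓ̂_dsm(·;S,τ) over all score functions). -/

import Mathlib

open MeasureTheory Real ENNReal

noncomputable section

/-- Euclidean space `ℝ^d`. -/
abbrev Euc (d : ℕ) : Type := EuclideanSpace ℝ (Fin d)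

/-- The variance `σ_t²` of the forward OU transition kernel. -/
def sigSq (α t : ℝ) : ℝ := if 0 < α then (1 - Real.exp (-(2 * α * t))) / α else 2 * t

/-- The mean contraction `μ_t = e^{-αt}` of the forward OU transition kernel. -/
def muOU (α t : ℝ) : ℝ := Real.exp (-(α * t))

/-- The forward Ornstein–Uhlenbeck transition density `φ_t(y|x)`,
the density of `N(μ_t x, σ_t² I_d)` at `y`. -/
def ouKernel (d : ℕ) (α t : ℝ) (x y : Euc d) : ℝ :=
  (2 * Real.pi * sigSq α t) ^ (-(d : ℝ) / 2) *
    Real.exp (-‖y - muOU α t • x‖ ^ 2 / (2 * sigSq α t))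

/-- The conditional score `∇_y log φ_t(y|x) = (μ_t x - y)/σ_t²`. -/
def condScore (d : ℕ) (α t : ℝ) (x y : Euc d) : Euc d :=
  (sigSq α t)⁻¹ • (muOU α t • x - y)

/-- Empirical density `p̂_t(y) = N⁻¹ ∑ φ_t(y|x_i)`. -/
def empDens (d N : ℕ) (α : ℝ) (S : Fin N → Euc d) (t : ℝ) (y : Euc d) : ℝ :=
  (N : ℝ)⁻¹ * ∑ i, ouKernel d α t (S i) y

/-- Empirical score function `ŝ*(y,t) = ∇_y log p̂_t(y)`. -/
def empScore (d N : ℕ) (α : ℝ) (S : Fin N → Euc d) (t : ℝ) (y : Euc d) : Euc d :=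
  gradient (fun z => Real.log (empDens d N α S t z)) y

/-- Empirical denoising score matching loss `ℓ̂_dsm(s; S, τ)`, valued in `[0,∞]`. -/
def empDSM (d N : ℕ) (α : ℝ) (τ : Measure ℝ) (s : Euc d → ℝ → Euc d)
    (S : Fin N → Euc d) : ℝ≥0∞ :=
  (N : ℝ≥0∞)⁻¹ * ∑ i, ∫⁻ t, ∫⁻ y,
    ENNReal.ofReal (‖s y t - condScore d α t (S i) y‖ ^ 2 * ouKernel d α t (S i) y)
      ∂volume ∂τ

/-- Empirical score matching loss `ℓ̂_sm(s; S, τ)`, valued in `[0,∞]`. -/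
def empSM (d N : ℕ) (α : ℝ) (τ : Measure ℝ) (s : Euc d → ℝ → Euc d)
    (S : Fin N → Euc d) : ℝ≥0∞ :=
  ∫⁻ t, ∫⁻ y,
    ENNReal.ofReal (‖s y t - empScore d N α S t y‖ ^ 2 * empDens d N α S t y) ∂volume ∂τ

/-- Empirical posterior mean `m̂_{1,t}(y)`. -/
def empM1 (d N : ℕ) (α : ℝ) (S : Fin N → Euc d) (t : ℝ) (y : Euc d) : Euc d :=
  (∑ i, ouKernel d α t (S i) y)⁻¹ • ∑ i, ouKernel d α t (S i) y • S i

/-- Empirical posterior second moment `m̂_{2,t}(y)`. -/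
def empM2 (d N : ℕ) (α : ℝ) (S : Fin N → Euc d) (t : ℝ) (y : Euc d) : ℝ :=
  (∑ i, ouKernel d α t (S i) y)⁻¹ * ∑ i, ouKernel d α t (S i) y * ‖S i‖ ^ 2

/-- The empirical constant `Ĉ_sm(S,τ)` separating `ℓ̂_dsm` and `ℓ̂_sm`. -/
def empCsm (d N : ℕ) (α : ℝ) (τ : Measure ℝ) (S : Fin N → Euc d) : ℝ≥0∞ :=
  ∫⁻ t, (ENNReal.ofReal (muOU α t ^ 2 / sigSq α t ^ 2) *
    ∫⁻ y, ENNReal.ofReal ((empM2 d N α S t y - ‖empM1 d N α S t y‖ ^ 2) *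
      empDens d N α S t y) ∂volume) ∂τ

/-- Population density `p_t(y) = ∫ φ_t(y|x) ν(dx)`. -/
def popDens (d : ℕ) (α : ℝ) (ν : Measure (Euc d)) (t : ℝ) (y : Euc d) : ℝ :=
  ∫ x, ouKernel d α t x y ∂ν

/-- Population score function `s*(y,t) = ∇_y log p_t(y)`. -/
def popScore (d : ℕ) (α : ℝ) (ν : Measure (Euc d)) (t : ℝ) (y : Euc d) : Euc d :=
  gradient (fun z => Real.log (popDens d α ν t z)) y

/-- Population denoising score matching loss `ℓ_dsm(s; τ)`, valued in `[0,∞]`. -/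
def popDSM (d : ℕ) (α : ℝ) (τ : Measure ℝ) (ν : Measure (Euc d))
    (s : Euc d → ℝ → Euc d) : ℝ≥0∞ :=
  ∫⁻ t, ∫⁻ x, ∫⁻ y,
    ENNReal.ofReal (‖s y t - condScore d α t x y‖ ^ 2 * ouKernel d α t x y) ∂volume ∂ν ∂τ

/-- Population score matching loss `ℓ_sm(s; τ)`, valued in `[0,∞]`. -/
def popSM (d : ℕ) (α : ℝ) (τ : Measure ℝ) (ν : Measure (Euc d))
    (s : Euc d → ℝ → Euc d) : ℝ≥0∞ :=
  ∫⁻ t, ∫⁻ y,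
    ENNReal.ofReal (‖s y t - popScore d α ν t y‖ ^ 2 * popDens d α ν t y) ∂volume ∂τ

/-- Population posterior mean `m_{1,t}(y)`. -/
def popM1 (d : ℕ) (α : ℝ) (ν : Measure (Euc d)) (t : ℝ) (y : Euc d) : Euc d :=
  (popDens d α ν t y)⁻¹ • ∫ x, ouKernel d α t x y • x ∂ν

/-- Population posterior second moment `m_{2,t}(y)`. -/
def popM2 (d : ℕ) (α : ℝ) (ν : Measure (Euc d)) (t : ℝ) (y : Euc d) : ℝ :=
  (popDens d α ν t y)⁻¹ * ∫ x, ouKernel d α t x y * ‖x‖ ^ 2 ∂ν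

/-- The population constant `C_sm` separating `ℓ_dsm` and `ℓ_sm`. -/
def popCsm (d : ℕ) (α : ℝ) (τ : Measure ℝ) (ν : Measure (Euc d)) : ℝ≥0∞ :=
  ∫⁻ t, (ENNReal.ofReal (muOU α t ^ 2 / sigSq α t ^ 2) *
    ∫⁻ y, ENNReal.ofReal ((popM2 d α ν t y - ‖popM1 d α ν t y‖ ^ 2) *
      popDens d α ν t y) ∂volume) ∂τ

/-- Joint law of `(S, x̃)` where `S` has `N` i.i.d. `ν` entries and `x̃ ~ ν` is independent. -/
def pairLaw (d N : ℕ) (ν : Measure (Euc d)) : Measure ((Fin N → Euc d) × Euc d) :=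
  (Measure.pi fun _ : Fin N => ν).prod ν

/-- The expected squared score-stability discrepancy of a deterministic score matching
algorithm `A` at coordinate `i`. -/
def stabGap (d N : ℕ) (α : ℝ) (τ : Measure ℝ) (ν : Measure (Euc d))
    (A : (Fin N → Euc d) → Euc d → ℝ → Euc d) (i : Fin N) : ℝ≥0∞ :=
  ∫⁻ q : (Fin N → Euc d) × Euc d,
    (∫⁻ t, ∫⁻ y, ENNReal.ofReal
      (‖A q.1 y t - A (Function.update q.1 i q.2) y t‖ ^ 2 * ouKernel d α t q.2 y)
        ∂volume ∂τ) ∂(pairLaw d N ν)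

/-- Score stability with constant `ε`. -/
def ScoreStable (d N : ℕ) (α : ℝ) (τ : Measure ℝ) (ν : Measure (Euc d))
    (A : (Fin N → Euc d) → Euc d → ℝ → Euc d) (ε : ℝ) : Prop :=
  ∀ i : Fin N, stabGap d N α τ ν A i ≤ ENNReal.ofReal (ε ^ 2)



section Helpers

variable {d N : ℕ} {α t T : ℝ}

lemma sigSq_pos (hα : 0 ≤ α) (ht : 0 < t) : 0 < sigSq α t := by
  unfold sigSq
  split_ifs with h
  · have h1 : Real.exp (-(2 * α * t)) < 1 := by
      rw [Real.exp_lt_one_iff]; nlinarith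
    have := div_pos (by linarith : (0:ℝ) < 1 - Real.exp (-(2 * α * t))) h
    linarith
  · linarith

lemma ouKernel_pos (hσ : 0 < sigSq α t) (x y : Euc d) : 0 < ouKernel d α t x y :=
  mul_pos (Real.rpow_pos_of_pos (by positivity) _) (Real.exp_pos _)

lemma ouKernel_le (hσ : 0 < sigSq α t) (x y : Euc d) :
    ouKernel d α t x y ≤ (2 * Real.pi * sigSq α t) ^ (-(d:ℝ)/2) := by
  have h1 : Real.exp (-‖y - muOU α t • x‖ ^ 2 / (2 * sigSq α t)) ≤ 1 := by
    rw [Real.exp_le_one_iff]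
    apply div_nonpos_of_nonpos_of_nonneg
    · simp [sq_nonneg]
    · positivity
  unfold ouKernel
  exact mul_le_of_le_one_right (Real.rpow_pos_of_pos (by positivity) _).le h1

@[fun_prop]
lemma measurable_sigSq : Measurable (sigSq α) := by
  unfold sigSq
  by_cases h : 0 < α
  · simp only [if_pos h]; fun_prop
  · simp only [if_neg h]; fun_prop

@[fun_prop]
lemma measurable_ouKernel :
    Measurable (fun p : ℝ × Euc d × Euc d => ouKernel d α p.1 p.2.1 p.2.2) := by
  unfold ouKernel muOU
  have h1 : Measurable fun p : ℝ × Euc d × Euc d => sigSq α p.1 :=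
    measurable_sigSq.comp measurable_fst
  fun_prop

end Helpers

section Helpers2

variable {E : Type*} [NormedAddCommGroup E] [InnerProductSpace ℝ E]

lemma weighted_var {n : ℕ} (w : Fin n → ℝ) (x : Fin n → E) (hW : (∑ j, w j) ≠ 0) :
    ∑ i, w i * ‖(∑ j, w j)⁻¹ • (∑ j, w j • x j) - x i‖ ^ 2
      = ∑ i, w i * ‖x i‖ ^ 2 - (∑ j, w j) * ‖(∑ j, w j)⁻¹ • (∑ j, w j • x j)‖ ^ 2 := by
  set W := ∑ j, w j with hWdef
  set m : E := W⁻¹ • (∑ j, w j • x j) with hm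
  have hu : ∑ j, w j • x j = W • m := by rw [hm, smul_inv_smul₀ hW]
  have key : ∑ i, w i * (inner ℝ m (x i) : ℝ) = W * ‖m‖ ^ 2 := by
    have : (∑ i, w i * (inner ℝ m (x i) : ℝ)) = inner ℝ m (∑ j, w j • x j) := by
      rw [inner_sum]
      exact Finset.sum_congr rfl fun i _ => (real_inner_smul_right m (x i) (w i)).symm
    rw [this, hu, real_inner_smul_right, real_inner_self_eq_norm_sq]
  have expand : ∀ i, w i * ‖m - x i‖ ^ 2
      = w i * ‖m‖ ^ 2 - 2 * (w i * (inner ℝ m (x i) : ℝ)) + w i * ‖x i‖ ^ 2 := by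
    intro i
    rw [norm_sub_sq_real]
    ring
  calc ∑ i, w i * ‖m - x i‖ ^ 2
      = ∑ i, (w i * ‖m‖ ^ 2 - 2 * (w i * (inner ℝ m (x i) : ℝ)) + w i * ‖x i‖ ^ 2) :=
        Finset.sum_congr rfl fun i _ => expand i
    _ = (∑ i, w i) * ‖m‖ ^ 2 - 2 * (∑ i, w i * (inner ℝ m (x i) : ℝ)) + ∑ i, w i * ‖x i‖ ^ 2 := by
        rw [Finset.sum_add_distrib, Finset.sum_sub_distrib, ← Finset.sum_mul, Finset.mul_sum]
    _ = ∑ i, w i * ‖ x i‖ ^ 2 - W * ‖m‖ ^ 2 := by rw [key, ← hWdef]; ring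

lemma measurePreserving_eval_pi {δ : Type*} [MeasurableSpace δ] (ν : Measure δ)
    [IsProbabilityMeasure ν] {N : ℕ} (i : Fin N) :
    MeasurePreserving (Function.eval i) (Measure.pi fun _ : Fin N => ν) ν := by
  refine ⟨measurable_pi_apply i, ?_⟩
  ext s hs
  rw [Measure.map_apply (measurable_pi_apply i) hs]
  have hpre : Function.eval i ⁻¹' s
      = Set.pi Set.univ (Function.update (fun _ : Fin N => (Set.univ : Set δ)) i s) := by
    ext f
    simp [Function.update_apply, Function.eval]
  rw [hpre, Measure.pi_pi]
  have : ∀ j, ν (Function.update (fun _ : Fin N => (Set.univ : Set δ)) i s j)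
      = if j = i then ν s else 1 := by
    intro j
    rw [Function.update_apply]
    split_ifs <;> simp
  rw [Finset.prod_congr rfl fun j _ => this j, Finset.prod_ite_eq' Finset.univ i fun _ => ν s]
  simp

end Helpers2

section Gradient

variable {d N : ℕ} {α t : ℝ}

lemma empDens_pos (hσ : 0 < sigSq α t) (hN : 0 < N) (S : Fin N → Euc d) (y : Euc d) :
    0 < empDens d N α S t y := by
  have : (0:ℝ) < ∑ i, ouKernel d α t (S i) y := by
    apply Finset.sum_pos (fun i _ => ouKernel_pos hσ _ _)
    have : Nonempty (Fin N) := ⟨⟨0, hN⟩⟩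
    exact Finset.univ_nonempty
  unfold empDens
  positivity

lemma hasGradientAt_log_empDens (hσ : 0 < sigSq α t) (hN : 0 < N)
    (S : Fin N → Euc d) (y : Euc d) :
    HasGradientAt (fun z => Real.log (empDens d N α S t z))
      ((sigSq α t)⁻¹ • (muOU α t • empM1 d N α S t y - y)) y := by
  set σ2 := sigSq α t with hσ2
  set μ := muOU α t with hμ
  set C : ℝ := (2 * Real.pi * σ2) ^ (-(d:ℝ)/2) with hC
  set c : ℝ := -(2*σ2)⁻¹ with hc
  have hker : ∀ (x z : Euc d), ouKernel d α t x z = C * Real.exp (c * ‖z - μ • x‖ ^ 2) := by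
    intro x z
    unfold ouKernel
    congr 1
    rw [hc]
    field_simp
    rfl
  -- Fréchet derivative of the empirical density
  set D : Fin N → Euc d →L[ℝ] ℝ := fun i =>
    (2:ℕ) • ((innerSL ℝ (y - μ • S i)).comp (ContinuousLinearMap.id ℝ (Euc d))) with hD
  have h6 : HasFDerivAt (fun z => ∑ i, C * Real.exp (c * ‖z - μ • S i‖ ^ 2))
      (∑ i, C • (Real.exp (c * ‖y - μ • S i‖ ^ 2) • (c • D i))) y := by
    apply HasFDerivAt.fun_sum
    intro i _
    exact ((((hasFDerivAt_id y).sub_const (μ • S i)).norm_sq.const_mul c).exp).const_mul C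
  have h9 : HasFDerivAt (fun z => empDens d N α S t z)
      ((N:ℝ)⁻¹ • (∑ i, C • (Real.exp (c * ‖y - μ • S i‖ ^ 2) • (c • D i)))) y := by
    have : (fun z => empDens d N α S t z)
        = fun z => (N:ℝ)⁻¹ * ∑ i, C * Real.exp (c * ‖z - μ • S i‖ ^ 2) := by
      funext z
      unfold empDens
      rw [Finset.sum_congr rfl fun i _ => hker (S i) z]
    rw [this]
    exact h6.const_mul _
  have h10 := h9.log (empDens_pos hσ hN S y).ne'
  rw [hasGradientAt_iff_hasFDerivAt]
  refine h10.congr_fderiv ?_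
  -- identify the dual vector
  apply ContinuousLinearMap.ext
  intro z
  have hW : (0:ℝ) < ∑ i, ouKernel d α t (S i) y := by
    apply Finset.sum_pos (fun i _ => ouKernel_pos hσ _ _)
    have : Nonempty (Fin N) := ⟨⟨0, hN⟩⟩
    exact Finset.univ_nonempty
  simp only [InnerProductSpace.toDual_apply_apply, ContinuousLinearMap.smul_apply,
    ContinuousLinearMap.coe_sum', Finset.sum_apply, ContinuousLinearMap.coe_smul',
    Pi.smul_apply, ContinuousLinearMap.coe_comp', Function.comp_apply,
    ContinuousLinearMap.coe_id', id_eq, innerSL_apply_apply, smul_eq_mul, nsmul_eq_mul,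
    Nat.cast_ofNat]
  rw [real_inner_smul_left, inner_sub_left, real_inner_smul_left]
  unfold empM1 empDens
  rw [real_inner_smul_left, sum_inner]
  have hsum1 : ∑ i, (inner ℝ (ouKernel d α t (S i) y • S i) z : ℝ)
      = ∑ i, ouKernel d α t (S i) y * inner ℝ (S i) z :=
    Finset.sum_congr rfl fun i _ => real_inner_smul_left _ _ _
  rw [hsum1]
  have hDz : ∀ i : Fin N, (D i) z = 2 * (inner ℝ (y - μ • S i) z : ℝ) := by
    intro i
    rw [hD]
    simp only [ContinuousLinearMap.smul_apply, ContinuousLinearMap.coe_comp',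
      Function.comp_apply, ContinuousLinearMap.coe_id', id_eq, innerSL_apply_apply,
      nsmul_eq_mul, Nat.cast_ofNat]
  have hterm : ∀ i : Fin N,
      C * (Real.exp (c * ‖y - μ • S i‖ ^ 2) * (c * ((D i) z)))
      = ouKernel d α t (S i) y * (-σ2⁻¹) * ((inner ℝ y z : ℝ) - μ * inner ℝ (S i) z) := by
    intro i
    rw [hDz i, hker (S i) y, inner_sub_left, real_inner_smul_left]
    have h2c : c * 2 = -σ2⁻¹ := by
      rw [hc]
      field_simp
    linear_combination C * Real.exp (c * ‖y - μ • S i‖ ^ 2)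
      * ((inner ℝ y z : ℝ) - μ * inner ℝ (S i) z) * h2c
  rw [Finset.sum_congr rfl fun i _ => hterm i]
  have hsplit : ∑ i, ouKernel d α t (S i) y * (-σ2⁻¹) * ((inner ℝ y z : ℝ) - μ * inner ℝ (S i) z)
      = -σ2⁻¹ * (inner ℝ y z : ℝ) * (∑ i, ouKernel d α t (S i) y)
        + σ2⁻¹ * μ * (∑ i, ouKernel d α t (S i) y * (inner ℝ (S i) z : ℝ)) := by
    rw [Finset.mul_sum, Finset.mul_sum, ← Finset.sum_add_distrib]
    exact Finset.sum_congr rfl fun i _ => by ring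
  rw [hsplit]
  have hNne : (N:ℝ) ≠ 0 := Nat.cast_ne_zero.mpr hN.ne'
  field_simp
  ring

end Gradient

section Pointwise

variable {d N : ℕ} {α t : ℝ}

/-- The empirical posterior variance integrand. -/
def Vfun (d N : ℕ) (α t : ℝ) (S : Fin N → Euc d) (y : Euc d) : ℝ :=
  (N:ℝ)⁻¹ * ∑ i, ouKernel d α t (S i) y * ‖S i‖ ^ 2
    - (N:ℝ)⁻¹ * ((∑ i, ouKernel d α t (S i) y) * ‖empM1 d N α S t y‖ ^ 2)

lemma sum_ouKernel_pos (hσ : 0 < sigSq α t) (hN : 0 < N) (S : Fin N → Euc d) (y : Euc d) :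
    0 < ∑ i, ouKernel d α t (S i) y := by
  apply Finset.sum_pos (fun i _ => ouKernel_pos hσ _ _)
  have : Nonempty (Fin N) := ⟨⟨0, hN⟩⟩
  exact Finset.univ_nonempty

lemma Vfun_eq (hσ : 0 < sigSq α t) (hN : 0 < N) (S : Fin N → Euc d) (y : Euc d) :
    Vfun d N α t S y
      = (N:ℝ)⁻¹ * ∑ i, ouKernel d α t (S i) y * ‖empM1 d N α S t y - S i‖ ^ 2 := by
  have hW := (sum_ouKernel_pos hσ hN S y).ne'
  unfold Vfun empM1
  rw [weighted_var (fun i => ouKernel d α t (S i) y) S hW]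
  ring

lemma Vfun_nonneg (hσ : 0 < sigSq α t) (hN : 0 < N) (S : Fin N → Euc d) (y : Euc d) :
    0 ≤ Vfun d N α t S y := by
  rw [Vfun_eq hσ hN]
  apply mul_nonneg (by positivity)
  exact Finset.sum_nonneg fun i _ => mul_nonneg (ouKernel_pos hσ _ _).le (sq_nonneg _)

lemma Vfun_le (hσ : 0 < sigSq α t) (hN : 0 < N) (S : Fin N → Euc d) (y : Euc d) :
    Vfun d N α t S y ≤ (N:ℝ)⁻¹ * ∑ i, ouKernel d α t (S i) y * ‖S i‖ ^ 2 := by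
  have h2 : 0 ≤ (N:ℝ)⁻¹ * ((∑ i, ouKernel d α t (S i) y) * ‖empM1 d N α S t y‖ ^ 2) := by
    have := (sum_ouKernel_pos hσ hN S y).le
    positivity
  unfold Vfun
  linarith

lemma pointwise_loss (hσ : 0 < sigSq α t) (hN : 0 < N) (S : Fin N → Euc d) (y : Euc d) :
    (N:ℝ)⁻¹ * ∑ i, ‖(sigSq α t)⁻¹ • (muOU α t • empM1 d N α S t y - y)
        - condScore d α t (S i) y‖ ^ 2 * ouKernel d α t (S i) y
      = muOU α t ^ 2 / sigSq α t ^ 2 * Vfun d N α t S y := by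
  set σ2 := sigSq α t with hσ2
  set μ := muOU α t with hμ
  have hdiff : ∀ i : Fin N, σ2⁻¹ • (μ • empM1 d N α S t y - y) - condScore d α t (S i) y
      = (σ2⁻¹ * μ) • (empM1 d N α S t y - S i) := by
    intro i
    unfold condScore
    rw [← smul_sub, sub_sub_sub_cancel_right, ← smul_sub, smul_smul]
  have hnorm : ∀ i : Fin N,
      ‖σ2⁻¹ • (μ • empM1 d N α S t y - y) - condScore d α t (S i) y‖ ^ 2
      = (σ2⁻¹ * μ) ^ 2 * ‖empM1 d N α S t y - S i‖ ^ 2 := by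
    intro i
    rw [hdiff i, norm_smul, Real.norm_eq_abs, mul_pow, sq_abs]
  rw [Finset.sum_congr rfl fun i _ => by rw [hnorm i]]
  rw [Vfun_eq hσ hN]
  have : ∑ i, (σ2⁻¹ * μ) ^ 2 * ‖empM1 d N α S t y - S i‖ ^ 2 * ouKernel d α t (S i) y
      = (σ2⁻¹ * μ) ^ 2 * ∑ i, ouKernel d α t (S i) y * ‖empM1 d N α S t y - S i‖ ^ 2 := by
    rw [Finset.mul_sum]
    exact Finset.sum_congr rfl fun i _ => by ring
  rw [this]
  rw [div_eq_mul_inv, ← inv_pow]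
  ring

end Pointwise

section Marginals

lemma integrable_eval_pi {δ : Type*} [MeasurableSpace δ] {ν : Measure δ}
    [IsProbabilityMeasure ν] {N : ℕ} {i : Fin N} {E : Type*} [NormedAddCommGroup E]
    {f : δ → E} (hf : Integrable f ν) :
    Integrable (fun S : Fin N → δ => f (S i)) (Measure.pi fun _ => ν) :=
  ((measurePreserving_eval_pi ν i).integrable_comp hf.aestronglyMeasurable).mpr hf

lemma integral_eval_pi {δ : Type*} [MeasurableSpace δ] {ν : Measure δ}
    [IsProbabilityMeasure ν] {N : ℕ} {i : Fin N} {E : Type*} [NormedAddCommGroup E]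
    [NormedSpace ℝ E] {f : δ → E} (hf : AEStronglyMeasurable f ν) :
    ∫ S : Fin N → δ, f (S i) ∂(Measure.pi fun _ => ν) = ∫ x, f x ∂ν := by
  have h := measurePreserving_eval_pi ν i
  have hf' : AEStronglyMeasurable f
      (Measure.map (Function.eval i) (Measure.pi fun _ : Fin N => ν)) := by
    rw [h.map_eq]; exact hf
  conv_rhs => rw [← h.map_eq]
  rw [integral_map h.measurable.aemeasurable hf']

end Marginals

section MeasAux

variable {d N : ℕ} {α t : ℝ}

lemma measurable_ouKernel_x {y : Euc d} :
    Measurable (fun x : Euc d => ouKernel d α t x y) := by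
  unfold ouKernel muOU
  fun_prop

lemma measurable_empM1_S {y : Euc d} :
    Measurable (fun S : Fin N → Euc d => empM1 d N α S t y) := by
  unfold empM1
  apply Measurable.fun_smul
  · exact (Finset.measurable_sum Finset.univ
      (fun i _ => measurable_ouKernel_x.comp (measurable_pi_apply i))).inv
  · exact Finset.measurable_sum Finset.univ
      (fun i _ => (measurable_ouKernel_x.comp (measurable_pi_apply i)).smul
        (measurable_pi_apply i))

end MeasAux

section Expectation

variable {d N : ℕ} {α t : ℝ}

set_option maxHeartbeats 1000000 in
lemma exp_V_le (hσ : 0 < sigSq α t) (hN : 0 < N)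
    (ν : Measure (Euc d)) [IsProbabilityMeasure ν]
    (hmom : (∫⁻ x, ENNReal.ofReal (‖x‖ ^ 2) ∂ν) ≠ ⊤) (y : Euc d) :
    ∫⁻ S, ENNReal.ofReal (Vfun d N α t S y) ∂(Measure.pi fun _ : Fin N => ν)
      ≤ ENNReal.ofReal ((popM2 d α ν t y - ‖popM1 d α ν t y‖ ^ 2) * popDens d α ν t y) := by
  have hNR : (0:ℝ) < (N:ℝ) := Nat.cast_pos.mpr hN
  set Cb : ℝ := (2 * Real.pi * sigSq α t) ^ (-(d:ℝ)/2) with hCb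
  have hwpos : ∀ x : Euc d, 0 < ouKernel d α t x y := fun x => ouKernel_pos hσ x y
  have hwle : ∀ x : Euc d, ouKernel d α t x y ≤ Cb := fun x => ouKernel_le hσ x y
  have hwmeas : Measurable (fun x : Euc d => ouKernel d α t x y) := measurable_ouKernel_x
  -- integrability facts over ν
  have hI2 : Integrable (fun x : Euc d => ‖x‖ ^ 2) ν := by
    refine ⟨(measurable_norm.pow_const 2).aestronglyMeasurable, ?_⟩
    rw [hasFiniteIntegral_iff_ofReal (Filter.Eventually.of_forall fun x => sq_nonneg _)]
    exact lt_top_iff_ne_top.mpr hmom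
  have hIw2 : Integrable (fun x : Euc d => ouKernel d α t x y * ‖x‖ ^ 2) ν := by
    refine Integrable.mono' (hI2.const_mul Cb)
      ((hwmeas.mul (measurable_norm.pow_const 2)).aestronglyMeasurable)
      (Filter.Eventually.of_forall fun x => ?_)
    rw [Real.norm_eq_abs, abs_of_nonneg (mul_nonneg (hwpos x).le (sq_nonneg _))]
    exact mul_le_mul_of_nonneg_right (hwle x) (sq_nonneg _)
  have hIw : Integrable (fun x : Euc d => ouKernel d α t x y) ν := by
    refine Integrable.mono' (integrable_const Cb) hwmeas.aestronglyMeasurable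
      (Filter.Eventually.of_forall fun x => ?_)
    rw [Real.norm_eq_abs, abs_of_nonneg (hwpos x).le]
    exact hwle x
  have hI1 : Integrable (fun x : Euc d => ‖x‖) ν := by
    refine Integrable.mono' ((integrable_const (1:ℝ)).add hI2)
      measurable_norm.aestronglyMeasurable (Filter.Eventually.of_forall fun x => ?_)
    rw [norm_norm]
    simp only [Pi.add_apply]
    nlinarith [norm_nonneg x, sq_nonneg (‖x‖ - 1)]
  have hIwx : Integrable (fun x : Euc d => ouKernel d α t x y • x) ν := by
    refine Integrable.mono' (hI1.const_mul Cb)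
      ((hwmeas.smul measurable_id).aestronglyMeasurable)
      (Filter.Eventually.of_forall fun x => ?_)
    rw [norm_smul, Real.norm_eq_abs, abs_of_nonneg (hwpos x).le]
    exact mul_le_mul_of_nonneg_right (hwle x) (norm_nonneg _)
  -- population quantities
  have hppos : 0 < popDens d α ν t y := by
    unfold popDens
    rw [integral_pos_iff_support_of_nonneg (fun x => (hwpos x).le) hIw]
    have : (Function.support fun x : Euc d => ouKernel d α t x y) = Set.univ := by
      ext x; simp [Function.support, (hwpos x).ne']
    rw [this]
    simp
  set p : ℝ := popDens d α ν t y with hpdef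
  set J : Euc d := ∫ x, ouKernel d α t x y • x ∂ν with hJdef
  have hM1 : popM1 d α ν t y = p⁻¹ • J := by
    unfold popM1
    rw [← hpdef, ← hJdef]
  have hM2 : popM2 d α ν t y * p = ∫ x, ouKernel d α t x y * ‖x‖ ^ 2 ∂ν := by
    unfold popM2
    rw [← hpdef, inv_mul_eq_div, div_mul_cancel₀ _ hppos.ne']
  -- expectations of the two parts
  have hEA : ∫ S, (N:ℝ)⁻¹ * ∑ i, ouKernel d α t (S i) y * ‖S i‖ ^ 2
      ∂(Measure.pi fun _ : Fin N => ν) = popM2 d α ν t y * p := by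
    rw [integral_const_mul,
      integral_finset_sum Finset.univ (fun i _ => integrable_eval_pi hIw2),
      Finset.sum_congr rfl fun i _ => integral_eval_pi hIw2.aestronglyMeasurable,
      Finset.sum_const, hM2]
    simp only [Finset.card_univ, Fintype.card_fin, nsmul_eq_mul]
    rw [← mul_assoc, inv_mul_cancel₀ hNR.ne', one_mul]
  have hEu : ∫ S, (∑ i, ouKernel d α t (S i) y • S i)
      ∂(Measure.pi fun _ : Fin N => ν) = (N:ℝ) • J := by
    rw [integral_finset_sum Finset.univ (fun i _ => integrable_eval_pi hIwx),
      Finset.sum_congr rfl fun i _ => integral_eval_pi hIwx.aestronglyMeasurable,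
      Finset.sum_const]
    rw [← hJdef, Finset.card_univ, Fintype.card_fin, Nat.cast_smul_eq_nsmul]
  have hEW : ∫ S, (∑ i, ouKernel d α t (S i) y)
      ∂(Measure.pi fun _ : Fin N => ν) = (N:ℝ) * p := by
    rw [integral_finset_sum Finset.univ (fun i _ => integrable_eval_pi hIw),
      Finset.sum_congr rfl fun i _ => integral_eval_pi hIw.aestronglyMeasurable,
      Finset.sum_const]
    simp [Finset.card_univ, hpdef, popDens]
  -- the quadratic lower bound for the second term
  set a : Euc d := p⁻¹ • J with hadef
  set B : (Fin N → Euc d) → ℝ := fun S =>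
    (N:ℝ)⁻¹ * ((∑ i, ouKernel d α t (S i) y) * ‖empM1 d N α S t y‖ ^ 2) with hBdef
  set g0 : (Fin N → Euc d) → ℝ := fun S =>
    (N:ℝ)⁻¹ * (2 * (inner ℝ a (∑ i, ouKernel d α t (S i) y • S i) : ℝ)
      - ‖a‖ ^ 2 * ∑ i, ouKernel d α t (S i) y) with hg0def
  have hg0_le_B : ∀ S : Fin N → Euc d, g0 S ≤ B S := by
    intro S
    set u : Euc d := ∑ i, ouKernel d α t (S i) y • S i with hudef
    set W : ℝ := ∑ i, ouKernel d α t (S i) y with hWdef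
    have hWpos : 0 < W := sum_ouKernel_pos hσ hN S y
    have hm1 : empM1 d N α S t y = W⁻¹ • u := by
      unfold empM1
      rw [← hWdef, ← hudef]
    have hval : ‖empM1 d N α S t y‖ ^ 2 = (W⁻¹) ^ 2 * ‖u‖ ^ 2 := by
      rw [hm1, norm_smul, Real.norm_eq_abs, mul_pow, sq_abs]
    have hexp : ‖u - W • a‖ ^ 2 = ‖u‖ ^ 2 - 2 * (W * (inner ℝ a u : ℝ)) + W ^ 2 * ‖a‖ ^ 2 := by
      rw [norm_sub_sq_real, real_inner_smul_right, norm_smul, Real.norm_eq_abs, mul_pow, sq_abs,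
        real_inner_comm]
    have key : 2 * (W * (inner ℝ a u : ℝ)) - W ^ 2 * ‖a‖ ^ 2 ≤ ‖u‖ ^ 2 := by
      nlinarith [sq_nonneg ‖u - W • a‖, hexp]
    have hq : 2 * (inner ℝ a u : ℝ) - ‖a‖ ^ 2 * W ≤ W * ((W⁻¹) ^ 2 * ‖u‖ ^ 2) := by
      have hWne : W ≠ 0 := hWpos.ne'
      have : W * ((W⁻¹) ^ 2 * ‖u‖ ^ 2) = ‖u‖ ^ 2 / W := by
        first
        | (field_simp; ring)
        | field_simp
      rw [this, le_div_iff₀ hWpos]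
      nlinarith [key]
    rw [hBdef, hg0def]
    simp only
    rw [hval]
    have hNinv : (0:ℝ) ≤ (N:ℝ)⁻¹ := by positivity
    exact mul_le_mul_of_nonneg_left hq hNinv
  -- integrability over the product
  have hIA : Integrable (fun S : Fin N → Euc d =>
      (N:ℝ)⁻¹ * ∑ i, ouKernel d α t (S i) y * ‖S i‖ ^ 2) (Measure.pi fun _ : Fin N => ν) :=
    (integrable_finset_sum Finset.univ fun i _ => integrable_eval_pi hIw2).const_mul _
  have hBmeas : Measurable B := by
    apply Measurable.const_mul
    exact (Finset.measurable_sum Finset.univ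
      (fun i _ => measurable_ouKernel_x.comp (measurable_pi_apply i))).mul
      (measurable_empM1_S.norm.pow_const 2)
  have hB_nonneg : ∀ S, 0 ≤ B S := by
    intro S
    simp only [hBdef]
    have := (sum_ouKernel_pos hσ hN S y).le
    positivity
  have hB_le : ∀ S : Fin N → Euc d,
      B S ≤ (N:ℝ)⁻¹ * ∑ i, ouKernel d α t (S i) y * ‖S i‖ ^ 2 := by
    intro S
    have h0 := Vfun_nonneg hσ hN S y
    unfold Vfun at h0
    simp only [hBdef]
    linarith [h0]
  have hIB : Integrable B (Measure.pi fun _ : Fin N => ν) := by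
    refine Integrable.mono' hIA hBmeas.aestronglyMeasurable
      (Filter.Eventually.of_forall fun S => ?_)
    rw [Real.norm_eq_abs, abs_of_nonneg (hB_nonneg S)]
    exact hB_le S
  have hIu : Integrable (fun S : Fin N → Euc d => ∑ i, ouKernel d α t (S i) y • S i)
      (Measure.pi fun _ : Fin N => ν) :=
    integrable_finset_sum Finset.univ fun i _ => integrable_eval_pi hIwx
  have hIW : Integrable (fun S : Fin N → Euc d => ∑ i, ouKernel d α t (S i) y)
      (Measure.pi fun _ : Fin N => ν) :=
    integrable_finset_sum Finset.univ fun i _ => integrable_eval_pi hIw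
  have hIg0 : Integrable g0 (Measure.pi fun _ : Fin N => ν) := by
    apply Integrable.const_mul
    exact ((hIu.const_inner a).const_mul 2).sub (hIW.const_mul (‖a‖ ^ 2))
  -- expectation of the lower bound
  have hEg0 : ∫ S, g0 S ∂(Measure.pi fun _ : Fin N => ν) = ‖popM1 d α ν t y‖ ^ 2 * p := by
    rw [hg0def]
    simp only
    rw [integral_const_mul,
      integral_sub ((hIu.const_inner a).const_mul 2) (hIW.const_mul (‖a‖ ^ 2)),
      integral_const_mul, integral_const_mul, integral_inner hIu, hEu, hEW,
      real_inner_smul_right, hM1]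
    have hnorm_a : ‖a‖ ^ 2 = (p⁻¹) ^ 2 * ‖J‖ ^ 2 := by
      rw [hadef, norm_smul, Real.norm_eq_abs, mul_pow, sq_abs]
    have hinner_aJ : (inner ℝ a J : ℝ) = p⁻¹ * ‖J‖ ^ 2 := by
      rw [hadef, real_inner_smul_left, real_inner_self_eq_norm_sq]
    rw [hinner_aJ, hnorm_a]
    have hpne : p ≠ 0 := hppos.ne'
    field_simp
    ring
  -- conclude
  have hIV : Integrable (fun S : Fin N → Euc d => Vfun d N α t S y)
      (Measure.pi fun _ : Fin N => ν) := hIA.sub hIB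
  have hEV : ∫ S, Vfun d N α t S y ∂(Measure.pi fun _ : Fin N => ν)
      ≤ (popM2 d α ν t y - ‖popM1 d α ν t y‖ ^ 2) * p := by
    have h1 : ∫ S, Vfun d N α t S y ∂(Measure.pi fun _ : Fin N => ν)
        = popM2 d α ν t y * p - ∫ S, B S ∂(Measure.pi fun _ : Fin N => ν) := by
      have : (fun S : Fin N → Euc d => Vfun d N α t S y)
          = fun S => ((N:ℝ)⁻¹ * ∑ i, ouKernel d α t (S i) y * ‖S i‖ ^ 2) - B S := by
        funext S
        unfold Vfun
        rw [hBdef]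
      rw [this, integral_sub hIA hIB, hEA]
    have h2 : ∫ S, g0 S ∂(Measure.pi fun _ : Fin N => ν)
        ≤ ∫ S, B S ∂(Measure.pi fun _ : Fin N => ν) :=
      integral_mono hIg0 hIB hg0_le_B
    rw [h1]
    rw [hEg0] at h2
    nlinarith [h2]
  rw [← ofReal_integral_eq_lintegral_ofReal hIV
    (Filter.Eventually.of_forall fun S => Vfun_nonneg hσ hN S y)]
  exact ENNReal.ofReal_le_ofReal hEV

end Expectation

section MoreMeas

variable {d N : ℕ} {α : ℝ}

@[fun_prop]
lemma measurable_muOU : Measurable (muOU α) := by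
  unfold muOU
  fun_prop

lemma measurable_ratio : Measurable (fun t => ENNReal.ofReal (muOU α t ^ 2 / sigSq α t ^ 2)) :=
  (((measurable_muOU.pow_const 2).div (measurable_sigSq.pow_const 2))).ennreal_ofReal

set_option maxHeartbeats 2000000 in
lemma measurable_ouKernel_comp {β : Type*} [MeasurableSpace β]
    {ft : β → ℝ} {fx fy : β → Euc d} (h1 : Measurable ft) (h2 : Measurable fx)
    (h3 : Measurable fy) : Measurable (fun b => ouKernel d α (ft b) (fx b) (fy b)) := by
  fun_prop

lemma measurable_V_joint {N : ℕ} :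
    Measurable (fun q : ((Fin N → Euc d) × ℝ) × Euc d =>
      ENNReal.ofReal (Vfun d N α q.1.2 q.1.1 q.2)) := by
  have hk : ∀ i : Fin N, Measurable (fun q : ((Fin N → Euc d) × ℝ) × Euc d =>
      ouKernel d α q.1.2 (q.1.1 i) q.2) := fun i =>
    measurable_ouKernel_comp (measurable_fst.snd)
      ((measurable_pi_apply i).comp measurable_fst.fst) measurable_snd
  have hSi : ∀ i : Fin N, Measurable (fun q : ((Fin N → Euc d) × ℝ) × Euc d => q.1.1 i) :=
    fun i => (measurable_pi_apply i).comp measurable_fst.fst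
  have hsum : Measurable (fun q : ((Fin N → Euc d) × ℝ) × Euc d =>
      ∑ i, ouKernel d α q.1.2 (q.1.1 i) q.2) :=
    Finset.measurable_sum Finset.univ fun i _ => hk i
  have hm1 : Measurable (fun q : ((Fin N → Euc d) × ℝ) × Euc d =>
      empM1 d N α q.1.1 q.1.2 q.2) := by
    unfold empM1
    exact (hsum.inv).smul (Finset.measurable_sum Finset.univ fun i _ => (hk i).smul (hSi i))
  unfold Vfun
  apply Measurable.ennreal_ofReal
  apply Measurable.sub
  · exact (Finset.measurable_sum Finset.univ fun i _ =>
      (hk i).mul ((hSi i).norm.pow_const 2)).const_mul _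
  · exact (hsum.mul (hm1.norm.pow_const 2)).const_mul _

lemma measurable_sc_integrand {N : ℕ} (S : Fin N → Euc d) (x : Euc d) :
    Measurable (fun q : ℝ × Euc d => ENNReal.ofReal
      (‖(sigSq α q.1)⁻¹ • (muOU α q.1 • empM1 d N α S q.1 q.2 - q.2)
          - condScore d α q.1 x q.2‖ ^ 2 * ouKernel d α q.1 x q.2)) := by
  have hk : ∀ i : Fin N, Measurable (fun q : ℝ × Euc d =>
      ouKernel d α q.1 (S i) q.2) := fun i =>
    measurable_ouKernel_comp measurable_fst measurable_const measurable_snd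
  have hsum : Measurable (fun q : ℝ × Euc d => ∑ i, ouKernel d α q.1 (S i) q.2) :=
    Finset.measurable_sum Finset.univ fun i _ => hk i
  have hm1 : Measurable (fun q : ℝ × Euc d => empM1 d N α S q.1 q.2) := by
    unfold empM1
    exact (hsum.inv).smul
      (Finset.measurable_sum Finset.univ fun i _ => (hk i).smul_const (S i))
  have hσi : Measurable (fun q : ℝ × Euc d => (sigSq α q.1)⁻¹) :=
    (measurable_sigSq.comp measurable_fst).inv
  have hμm : Measurable (fun q : ℝ × Euc d => muOU α q.1) :=
    measurable_muOU.comp measurable_fst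
  have hsc : Measurable (fun q : ℝ × Euc d =>
      (sigSq α q.1)⁻¹ • (muOU α q.1 • empM1 d N α S q.1 q.2 - q.2)) :=
    hσi.smul ((hμm.smul hm1).sub measurable_snd)
  have hcs : Measurable (fun q : ℝ × Euc d => condScore d α q.1 x q.2) := by
    unfold condScore
    exact hσi.smul ((hμm.smul_const x).sub measurable_snd)
  exact (((hsc.sub hcs).norm.pow_const 2).mul
    (measurable_ouKernel_comp measurable_fst measurable_const measurable_snd)).ennreal_ofReal

end MoreMeas

section MoreMeas2

variable {d N : ℕ} {α : ℝ}

lemma measurable_ouKernel_y {t : ℝ} {x : Euc d} :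
    Measurable (fun y : Euc d => ouKernel d α t x y) := by
  unfold ouKernel muOU
  fun_prop

lemma measurable_sc_integrand_y {N : ℕ} (t : ℝ) (S : Fin N → Euc d) (x : Euc d) :
    Measurable (fun y : Euc d => ENNReal.ofReal
      (‖(sigSq α t)⁻¹ • (muOU α t • empM1 d N α S t y - y)
          - condScore d α t x y‖ ^ 2 * ouKernel d α t x y)) := by
  have hk : ∀ i : Fin N, Measurable (fun y : Euc d => ouKernel d α t (S i) y) :=
    fun i => measurable_ouKernel_y
  have hsum : Measurable (fun y : Euc d => ∑ i, ouKernel d α t (S i) y) :=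
    Finset.measurable_sum Finset.univ fun i _ => hk i
  have hm1 : Measurable (fun y : Euc d => empM1 d N α S t y) := by
    unfold empM1
    exact (hsum.inv).smul
      (Finset.measurable_sum Finset.univ fun i _ => (hk i).smul_const (S i))
  have hsc : Measurable (fun y : Euc d =>
      (sigSq α t)⁻¹ • (muOU α t • empM1 d N α S t y - y)) :=
    measurable_const.fun_smul ((measurable_const.fun_smul hm1).sub measurable_id)
  have hcs : Measurable (fun y : Euc d => condScore d α t x y) := by
    unfold condScore
    exact measurable_const.fun_smul ((measurable_const : Measurable fun _ : Euc d => muOU α t • x).sub measurable_id)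
  exact (((hsc.sub hcs).norm.pow_const 2).mul measurable_ouKernel_y).ennreal_ofReal

end MoreMeas2


set_option maxHeartbeats 1000000 in
lemma step1_lemma {d N : ℕ} {α T : ℝ} (hα : 0 ≤ α) (hN : 0 < N)
    (τ : Measure ℝ) (hae : ∀ᵐ t ∂τ, t ∈ Set.Ioc 0 T) (S : Fin N → Euc d) :
    empDSM d N α τ (fun y t => empScore d N α S t y) S
      = ∫⁻ t, (ENNReal.ofReal (muOU α t ^ 2 / sigSq α t ^ 2)
          * ∫⁻ y, ENNReal.ofReal (Vfun d N α t S y) ∂volume) ∂τ := by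
  have hNR : (0:ℝ) < (N:ℝ) := Nat.cast_pos.mpr hN
  have hNinvtop : ((N:ℝ≥0∞))⁻¹ ≠ ⊤ :=
    ENNReal.inv_ne_top.mpr (by exact_mod_cast hNR.ne')
  have hNinv_eq : (N:ℝ≥0∞)⁻¹ = ENNReal.ofReal ((N:ℝ)⁻¹) := by
    rw [ENNReal.ofReal_inv_of_pos hNR, ENNReal.ofReal_natCast]
  unfold empDSM
  have hrep : ∀ i : Fin N, (∫⁻ t, ∫⁻ y, ENNReal.ofReal
      (‖(fun y t => empScore d N α S t y) y t - condScore d α t (S i) y‖ ^ 2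
        * ouKernel d α t (S i) y) ∂volume ∂τ)
      = ∫⁻ t, ∫⁻ y, ENNReal.ofReal
        (‖(sigSq α t)⁻¹ • (muOU α t • empM1 d N α S t y - y)
          - condScore d α t (S i) y‖ ^ 2 * ouKernel d α t (S i) y) ∂volume ∂τ := by
    intro i
    refine lintegral_congr_ae ?_
    filter_upwards [hae] with t ht
    refine lintegral_congr fun y => ?_
    have hσ := sigSq_pos hα ht.1
    have hES : empScore d N α S t y
        = (sigSq α t)⁻¹ • (muOU α t • empM1 d N α S t y - y) :=
      (hasGradientAt_log_empDens hσ hN S y).gradient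
    simp only [hES]
  rw [Finset.sum_congr rfl fun i _ => hrep i]
  have hX : ∀ i : Fin N, Measurable (fun t : ℝ => ∫⁻ y, ENNReal.ofReal
      (‖(sigSq α t)⁻¹ • (muOU α t • empM1 d N α S t y - y)
        - condScore d α t (S i) y‖ ^ 2 * ouKernel d α t (S i) y) ∂volume) :=
    fun i => (measurable_sc_integrand S (S i)).lintegral_prod_right'
  rw [← lintegral_finset_sum' Finset.univ (fun i _ => (hX i).aemeasurable)]
  rw [← lintegral_const_mul' ((N:ℝ≥0∞))⁻¹ _ hNinvtop]
  refine lintegral_congr_ae ?_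
  filter_upwards [hae] with t ht
  have hσ := sigSq_pos hα ht.1
  have hXy : ∀ i : Fin N, Measurable (fun y : Euc d => ENNReal.ofReal
      (‖(sigSq α t)⁻¹ • (muOU α t • empM1 d N α S t y - y)
        - condScore d α t (S i) y‖ ^ 2 * ouKernel d α t (S i) y)) :=
    fun i => measurable_sc_integrand_y t S (S i)
  rw [← lintegral_finset_sum' Finset.univ (fun i _ => (hXy i).aemeasurable)]
  rw [← lintegral_const_mul' ((N:ℝ≥0∞))⁻¹ _ hNinvtop]
  refine Eq.trans (lintegral_congr fun y => ?_)
    (lintegral_const_mul' _ _ ENNReal.ofReal_ne_top)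
  rw [hNinv_eq,
    ← ENNReal.ofReal_sum_of_nonneg
      (fun i _ => mul_nonneg (sq_nonneg _) (ouKernel_pos hσ _ _).le),
    ← ENNReal.ofReal_mul (by positivity : (0:ℝ) ≤ ((N:ℝ))⁻¹),
    pointwise_loss hσ hN S y]
  exact ENNReal.ofReal_mul (div_nonneg (sq_nonneg _) (sq_nonneg _))

set_option maxHeartbeats 1000000 in
/-- Under second-moment assumptions on `ν` and `∫ μ_t² σ_t⁻⁴ τ(dt) < ∞`, with
`S` having `N` i.i.d. `ν`-distributed entries, the expected minimal empirical denoising score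
matching loss (attained by the empirical score function `ŝ*_S(y,t) = ∇_y log p̂_t(y)`) is at
most the population constant: `E_S[ℓ̂_dsm(ŝ*_S;S,τ)] ≤ C_sm`. -/
theorem expected_min_empirical_dsm_le_Csm
    (d N : ℕ) (hN : 0 < N) (α T : ℝ) (hα : 0 ≤ α) (hT : 0 < T)
    (τ : Measure ℝ) [IsProbabilityMeasure τ] (hτ : τ (Set.Ioc 0 T)ᶜ = 0)
    (ν : Measure (Euc d)) [IsProbabilityMeasure ν]
    (hmom : (∫⁻ x, ENNReal.ofReal (‖x‖ ^ 2) ∂ν) ≠ ⊤)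
    (hτmom : (∫⁻ t, ENNReal.ofReal (muOU α t ^ 2 / sigSq α t ^ 2) ∂τ) ≠ ⊤) :
    (∫⁻ S, empDSM d N α τ (fun y t => empScore d N α S t y) S
        ∂(Measure.pi fun _ : Fin N => ν))
      ≤ popCsm d α τ ν := by
  classical
  have hae : ∀ᵐ t ∂τ, t ∈ Set.Ioc 0 T := by
    rw [MeasureTheory.ae_iff]
    exact hτ
  rw [lintegral_congr (step1_lemma hα hN τ hae)]
  have hVj := measurable_V_joint (d := d) (α := α) (N := N)
  have hG : AEMeasurable (Function.uncurry fun (S : Fin N → Euc d) (t : ℝ) =>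
      ENNReal.ofReal (muOU α t ^ 2 / sigSq α t ^ 2)
        * ∫⁻ y, ENNReal.ofReal (Vfun d N α t S y) ∂volume)
      ((Measure.pi fun _ : Fin N => ν).prod τ) :=
    ((measurable_ratio.comp measurable_snd).mul hVj.lintegral_prod_right').aemeasurable
  rw [lintegral_lintegral_swap hG]
  unfold popCsm
  refine lintegral_mono_ae ?_
  filter_upwards [hae] with t ht
  have hσ := sigSq_pos hα ht.1
  rw [lintegral_const_mul' _ _ ENNReal.ofReal_ne_top]
  refine mul_le_mul_right ?_ _
  have hVt : AEMeasurable (Function.uncurry fun (S : Fin N → Euc d) (y : Euc d) =>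
      ENNReal.ofReal (Vfun d N α t S y))
      ((Measure.pi fun _ : Fin N => ν).prod volume) :=
    (hVj.comp ((measurable_fst.prodMk measurable_const).prodMk
      measurable_snd)).aemeasurable
  rw [lintegral_lintegral_swap hVt]
  exact lintegral_mono fun y => exp_V_le hσ hN ν hmom y

end
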